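/- Let R be a commutative ℚ(q)-algebra and let H(z) = ∑_{n≥0} h_n z^n and E(z) = ∑_{n≥0} (-1)^n e_n z^n be formal power series over R with h_0 = e_0 = 1 and H(z)·E(z) = 1. Then H(q^{-1}z)·E(qz) = 1 - (q - q^{-1})·∑_{n≥1} (-q)^n (∑_{m=0}^n (-q)^{-m} [m] h_m e_{n-m}) z^n. -/

import Mathlib

/-!
Since $(q - q^{-1})(-q)^{n}(-q)^{-m}[m] = (q^m - q^{-m})(-q)^{n-m}$, the subtracted series is
$(H(qz) - H(q^{-1}z))\,E(qz)$, and $H(qz)E(qz) = 1$ is the rescaled form of $H(z)E(z) = 1$.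
-/

noncomputable def q : RatFunc ℚ := RatFunc.X

/-- The quantum integer [n] = (q^n - q^{-n})/(q - q^{-1}) in ℚ(q). -/
noncomputable def qint (n : ℤ) : RatFunc ℚ := (q ^ n - q ^ (-n)) / (q - q⁻¹)

lemma q_ne_zero : q ≠ 0 := RatFunc.X_ne_zero

lemma q_sub_inv_ne_zero : q - q⁻¹ ≠ 0 := by
  intro hq
  have hsq : (Polynomial.X ^ 2 : Polynomial ℚ) = 1 := by
    apply RatFunc.algebraMap_injective ℚ
    rw [map_pow, RatFunc.algebraMap_X, map_one]
    field_simp [q_ne_zero] at hq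
    simpa [q, sub_eq_zero] using hq
  simpa using congrArg (Polynomial.eval 0) hsq

lemma sub_inv_mul_qint (m : ℕ) : (q - q⁻¹) * qint m = q ^ m - q⁻¹ ^ m := by
  rw [qint, mul_div_cancel₀ _ q_sub_inv_ne_zero, zpow_neg, zpow_natCast, inv_pow]

lemma pow_sub_inv_pow_mul_neg_pow (m k : ℕ) :
    (q ^ m - q⁻¹ ^ m) * (-q) ^ k = (q - q⁻¹) * (-q) ^ (m + k) * ((-q) ^ (-(m : ℤ)) * qint m) := by
  have hm : (-q) ^ (m + k) * (-q) ^ (-(m : ℤ)) = (-q) ^ k := by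
    rw [zpow_neg, zpow_natCast, pow_add, mul_right_comm, mul_inv_cancel₀ (pow_ne_zero _
      (neg_ne_zero.mpr q_ne_zero)), one_mul]
  rw [← sub_inv_mul_qint, ← hm]
  ring

open PowerSeries Finset in
theorem halves_of_vertex_operators_minus_general {R : Type*} [CommRing R] [Algebra (RatFunc ℚ) R]
    (h e : ℕ → R)
    (H E : PowerSeries R)
    (hH : H = PowerSeries.mk fun n => h n)
    (hE : E = PowerSeries.mk fun n => (-1 : R) ^ n * e n)
    (hHE : H * E = 1) :
    PowerSeries.rescale (algebraMap (RatFunc ℚ) R q⁻¹) H *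
        PowerSeries.rescale (algebraMap (RatFunc ℚ) R q) E =
      1 - PowerSeries.mk (fun n => if n = 0 then 0 else
        algebraMap (RatFunc ℚ) R ((q - q⁻¹) * (-q) ^ n) *
          ∑ m ∈ Finset.range (n + 1),
            algebraMap (RatFunc ℚ) R ((-q) ^ (-(m : ℤ)) * qint m) * (h m * e (n - m))) := by
  set c := algebraMap (RatFunc ℚ) R
  have hHE_q : rescale (c q) H * rescale (c q) E = 1 := by rw [← map_mul, hHE, map_one]
  rw [eq_sub_iff_add_eq, ← hHE_q, ← eq_sub_iff_add_eq', ← sub_mul]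
  ext n
  rw [coeff_mul, coeff_mk, Nat.sum_antidiagonal_eq_sum_range_succ_mk]
  split_ifs with hn
  · simp [hn]
  rw [mul_sum]
  refine sum_congr rfl fun m hm => ?_
  obtain ⟨k, rfl⟩ := Nat.exists_eq_add_of_le (Nat.lt_succ_iff.mp (mem_range.mp hm))
  have hterm := congrArg c (pow_sub_inv_pow_mul_neg_pow m k)
  simp only [map_mul, map_sub, map_neg, map_pow] at hterm
  simp only [hH, hE, map_sub, coeff_rescale, coeff_mk, map_mul, map_neg, map_pow,
    Nat.add_sub_cancel_left]
  linear_combination -(h m * e k) * hterm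

open PowerSeries Finset in
theorem halves_of_vertex_operators_minus {R : Type*} [CommRing R] [Algebra (RatFunc ℚ) R]
    (h e : ℕ → R) (h0 : h 0 = 1) (e0 : e 0 = 1)
    (H E : PowerSeries R)
    (hH : H = PowerSeries.mk fun n => h n)
    (hE : E = PowerSeries.mk fun n => (-1 : R) ^ n * e n)
    (hHE : H * E = 1) :
    PowerSeries.rescale (algebraMap (RatFunc ℚ) R q⁻¹) H *
        PowerSeries.rescale (algebraMap (RatFunc ℚ) R q) E =
      1 - PowerSeries.mk (fun n => if n = 0 then 0 else
        algebraMap (RatFunc ℚ) R ((q - q⁻¹) * (-q) ^ n) *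
          ∑ m ∈ Finset.range (n + 1),
            algebraMap (RatFunc ℚ) R ((-q) ^ (-(m : ℤ)) * qint m) * (h m * e (n - m))) :=
  halves_of_vertex_operators_minus_general h e H E hH hE hHE
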